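/- Fix a finite nonempty index set V, finite nonempty label type L, a region family 𝓡 with potentials θ_r : Y_r → ℝ, a region graph E on 𝓡, ε > 0, positive coefficients c_r > 0 (r ∈ 𝓡), and a message vector λ. Define the weighted belief b_r^{λ,c}(z) = exp(θ_r^λ(z)/(ε·c_r)) / ∑_{z'∈Y_r} exp(θ_r^λ(z')/(ε·c_r)). Fix a region r and suppose that for every p ∈ P(r) and z ∈ Y_r: setting μ_{p→r}(z) = ε·c_p·log( ∑_{z_p ∈ Y_p, z_p|_r = z} exp( (θ_p(z_p) + ∑_{c ∈ C(p), c ≠ r} λ_{c→p}(z_p|_c) − ∑_{p' ∈ P(p)} λ_{p→p'}(z_p)) / (ε·c_p) ) ), one has λ_{r→p}(z) = (c_p/(c_r + ∑_{p' ∈ P(r)} c_{p'}))·( θ_r(z) + ∑_{c ∈ C(r)} λ_{c→r}(z|_c) + ∑_{p' ∈ P(r)} μ_{p'→r}(z) ) − μ_{p→r}(z). Then for every p ∈ P(r) and z ∈ Y_r, ∑_{z_p ∈ Y_p, z_p|_r = z} b_p^{λ,c}(z_p) = b_r^{λ,c}(z); i.e., the weighted norm-product update makes the weighted beliefs agree on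 their marginal probabilities at r. -/
import Mathlib


namespace Stmt10

variable {V L : Type*}

/-- Restriction of a partial label `z : ↥r → L` to a subregion `c ⊆ r`
(arbitrary when `c ⊄ r`). -/
noncomputable def res [DecidableEq V] [Nonempty L] (c r : Finset V) (z : ↥r → L) : ↥c → L :=
  if h : c ⊆ r then fun i => z ⟨i.1, h i.2⟩ else fun _ => Classical.arbitrary L

/-- Parents of a region `r` in the region graph `E`. -/
def parents [DecidableEq V] (E : Finset (Finset V × Finset V)) (r : Finset V) :
    Finset (Finset V) :=
  (E.filter (fun e => e.1 = r)).image Prod.snd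

/-- Children of a region `r` in the region graph `E`. -/
def children [DecidableEq V] (E : Finset (Finset V × Finset V)) (r : Finset V) :
    Finset (Finset V) :=
  (E.filter (fun e => e.2 = r)).image Prod.fst

variable [DecidableEq V] [Fintype L] [Nonempty L]

/-- Reparametrized potential `θ_r^λ`. -/
noncomputable def repot (θ : (r : Finset V) → (↥r → L) → ℝ)
    (E : Finset (Finset V × Finset V)) (lam : (r p : Finset V) → (↥r → L) → ℝ)
    (r : Finset V) (z : ↥r → L) : ℝ :=
  θ r z + (∑ c ∈ children E r, lam c r (res c r z)) - ∑ p ∈ parents E r, lam r p z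

/-- Weighted belief `b_r^{λ,c}` at temperature `ε` with coefficient `c_r`. -/
noncomputable def wbelief (ε : ℝ) (c : Finset V → ℝ) (θ : (r : Finset V) → (↥r → L) → ℝ)
    (E : Finset (Finset V × Finset V)) (lam : (r p : Finset V) → (↥r → L) → ℝ)
    (r : Finset V) (z : ↥r → L) : ℝ :=
  Real.exp (repot θ E lam r z / (ε * c r)) /
    ∑ z' : ↥r → L, Real.exp (repot θ E lam r z' / (ε * c r))

variable [DecidableEq L]

/-- The weighted message `μ_{p→r}` induced by the messages `λ`. -/
noncomputable def mu (ε : ℝ) (c : Finset V → ℝ) (θ : (r : Finset V) → (↥r → L) → ℝ)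
    (E : Finset (Finset V × Finset V)) (lam : (r p : Finset V) → (↥r → L) → ℝ)
    (p r : Finset V) (z : ↥r → L) : ℝ :=
  ε * c p * Real.log (∑ zp ∈ Finset.univ.filter (fun zp : ↥p → L => res r p zp = z),
    Real.exp ((θ p zp + (∑ c' ∈ (children E p).erase r, lam c' p (res c' p zp))
      - ∑ p' ∈ parents E p, lam p p' zp) / (ε * c p)))

/-- If the messages out of a region `r` satisfy the closed-form weighted
norm-product update, then the weighted beliefs agree on their marginal probabilities at
`r`: the marginal of every parent belief agrees with the belief at `r`. -/
theorem weighted_update_gives_local_consistency [Fintype V] [Nonempty V]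
    (𝓡 : Finset (Finset V)) (θ : (r : Finset V) → (↥r → L) → ℝ)
    (E : Finset (Finset V × Finset V))
    (hE : ∀ e ∈ E, e.1 ∈ 𝓡 ∧ e.2 ∈ 𝓡 ∧ e.1 ⊂ e.2)
    (ε : ℝ) (hε : 0 < ε)
    (c : Finset V → ℝ) (hc : ∀ r ∈ 𝓡, 0 < c r)
    (lam : (r p : Finset V) → (↥r → L) → ℝ)
    (r : Finset V) (hr : r ∈ 𝓡)
    (hfix : ∀ p ∈ parents E r, ∀ z : ↥r → L,
      lam r p z = (c p / (c r + ∑ p' ∈ parents E r, c p')) *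
          (θ r z + (∑ c' ∈ children E r, lam c' r (res c' r z)) +
            ∑ p' ∈ parents E r, mu ε c θ E lam p' r z)
        - mu ε c θ E lam p r z) :
    ∀ p ∈ parents E r, ∀ z : ↥r → L,
      ∑ zp ∈ Finset.univ.filter (fun zp : ↥p → L => res r p zp = z),
          wbelief ε c θ E lam p zp = wbelief ε c θ E lam r z := by
  intro p hp z
  -- every parent p' of r gives an edge (r, p') ∈ E
  have hpar : ∀ p' ∈ parents E r, (r, p') ∈ E := by
    intro p' hp'
    simp only [parents, Finset.mem_image, Finset.mem_filter] at hp'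
    obtain ⟨e, ⟨heE, h1⟩, h2⟩ := hp'
    have he : e = (r, p') := Prod.ext h1 h2
    rwa [he] at heE
  have hcpos : ∀ p' ∈ parents E r, 0 < c p' := fun p' hp' => hc p' (hE _ (hpar p' hp')).2.1
  have hchat : 0 < c r + ∑ p' ∈ parents E r, c p' := by
    apply add_pos_of_pos_of_nonneg (hc r hr)
    exact Finset.sum_nonneg fun p' hp' => (hcpos p' hp').le
  have hchat0 : (c r + ∑ p' ∈ parents E r, c p') ≠ 0 := hchat.ne'
  have hrpE : (r, p) ∈ E := hpar p hp
  have hsub : r ⊆ p := (hE _ hrpE).2.2.subset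
  have hcp : 0 < c p := hc p (hE _ hrpE).2.1
  have hcr : 0 < c r := hc r hr
  have hεcp : ε * c p ≠ 0 := (mul_pos hε hcp).ne'
  have hrchild : r ∈ children E p := by
    simp only [children, Finset.mem_image, Finset.mem_filter]
    exact ⟨(r, p), ⟨hrpE, rfl⟩, rfl⟩
  -- reparametrized potential at r, in terms of F
  have hrepot_r : ∀ z' : ↥r → L, repot θ E lam r z' =
      (c r / (c r + ∑ p' ∈ parents E r, c p')) *
        (θ r z' + (∑ c' ∈ children E r, lam c' r (res c' r z')) +
          ∑ p' ∈ parents E r, mu ε c θ E lam p' r z') := by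
    intro z'
    have hsum : ∑ p' ∈ parents E r, lam r p' z'
        = (∑ p' ∈ parents E r, c p') / (c r + ∑ p' ∈ parents E r, c p') *
            (θ r z' + (∑ c' ∈ children E r, lam c' r (res c' r z')) +
              ∑ p' ∈ parents E r, mu ε c θ E lam p' r z')
          - ∑ p' ∈ parents E r, mu ε c θ E lam p' r z' := by
      rw [Finset.sum_congr rfl (fun p' hp' => hfix p' hp' z'), Finset.sum_sub_distrib,
        ← Finset.sum_mul, ← Finset.sum_div]
    rw [repot, hsum]
    field_simp
    ring
  have hbr : ∀ z' : ↥r → L, Real.exp (repot θ E lam r z' / (ε * c r)) =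
      Real.exp ((θ r z' + (∑ c' ∈ children E r, lam c' r (res c' r z')) +
          ∑ p' ∈ parents E r, mu ε c θ E lam p' r z') / (ε * (c r + ∑ p' ∈ parents E r, c p'))) := by
    intro z'
    congr 1
    rw [hrepot_r z']
    field_simp
  -- the parent's reparametrized potential splits off the message from r
  have hrepot_p : ∀ zp : ↥p → L, repot θ E lam p zp =
      (θ p zp + (∑ c' ∈ (children E p).erase r, lam c' p (res c' p zp))
        - ∑ p' ∈ parents E p, lam p p' zp) + lam r p (res r p zp) := by
    intro zp
    simp only [repot]
    rw [← Finset.add_sum_erase _ _ hrchild]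
    ring
  -- fibers are nonempty
  have hfiber_ne : ∀ z' : ↥r → L,
      (Finset.univ.filter (fun zp : ↥p → L => res r p zp = z')).Nonempty := by
    intro z'
    refine ⟨fun i => if h : i.1 ∈ r then z' ⟨i.1, h⟩ else Classical.arbitrary L, ?_⟩
    simp only [Finset.mem_filter, Finset.mem_univ, true_and]
    funext i
    simp [res, hsub, i.2]
  have hSpos : ∀ z' : ↥r → L, 0 <
      ∑ zp ∈ Finset.univ.filter (fun zp : ↥p → L => res r p zp = z'),
        Real.exp ((θ p zp + (∑ c' ∈ (children E p).erase r, lam c' p (res c' p zp))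
          - ∑ p' ∈ parents E p, lam p p' zp) / (ε * c p)) :=
    fun z' => Finset.sum_pos (fun zp _ => Real.exp_pos _) (hfiber_ne z')
  -- exp of the message recovers the partial partition sum
  have hmu : ∀ z' : ↥r → L, Real.exp (mu ε c θ E lam p r z' / (ε * c p))
      = ∑ zp ∈ Finset.univ.filter (fun zp : ↥p → L => res r p zp = z'),
          Real.exp ((θ p zp + (∑ c' ∈ (children E p).erase r, lam c' p (res c' p zp))
            - ∑ p' ∈ parents E p, lam p p' zp) / (ε * c p)) := by
    intro z'
    rw [mu, mul_div_cancel_left₀ _ hεcp, Real.exp_log (hSpos z')]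
  -- the fiberwise marginal of the parent's Boltzmann weights
  have hmarg : ∀ z' : ↥r → L,
      (∑ zp ∈ Finset.univ.filter (fun zp : ↥p → L => res r p zp = z'),
        Real.exp (repot θ E lam p zp / (ε * c p)))
      = Real.exp ((θ r z' + (∑ c' ∈ children E r, lam c' r (res c' r z')) +
          ∑ p' ∈ parents E r, mu ε c θ E lam p' r z') / (ε * (c r + ∑ p' ∈ parents E r, c p'))) := by
    intro z'
    have h1 : ∀ zp ∈ Finset.univ.filter (fun zp : ↥p → L => res r p zp = z'),
        Real.exp (repot θ E lam p zp / (ε * c p))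
        = Real.exp ((θ p zp + (∑ c' ∈ (children E p).erase r, lam c' p (res c' p zp))
            - ∑ p' ∈ parents E p, lam p p' zp) / (ε * c p)) *
          Real.exp (lam r p z' / (ε * c p)) := by
      intro zp hzp
      simp only [Finset.mem_filter] at hzp
      rw [hrepot_p, hzp.2, add_div, Real.exp_add]
    rw [Finset.sum_congr rfl h1, ← Finset.sum_mul, ← hmu z', ← Real.exp_add]
    congr 1
    rw [hfix p hp z']
    field_simp
    ring
  -- partition functions agree
  have hZ : (∑ zp : ↥p → L, Real.exp (repot θ E lam p zp / (ε * c p)))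
      = ∑ z' : ↥r → L, Real.exp (repot θ E lam r z' / (ε * c r)) := by
    rw [← Finset.sum_fiberwise Finset.univ (fun zp : ↥p → L => res r p zp)
      (fun zp => Real.exp (repot θ E lam p zp / (ε * c p)))]
    exact Finset.sum_congr rfl fun z' _ => by rw [hmarg z', ← hbr z']
  -- conclude
  simp only [wbelief]
  rw [← Finset.sum_div, hZ, hmarg z, hbr z]

end Stmt10
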